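/- arXiv:1802.05357 — 5 statements merged into one kernel-verified Lean document; each statement's English description precedes it below -/
import Mathlib

section
/- Fix an integer K ≥ 2, strictly increasing nonzero reals ω_1 < ω_2 < ⋯ < ω_K, reals α̲ ≤ ᾱ, and a real x ≠ 0. Suppose (z, y, α, τ) is a PLT configuration and additionally τ belongs to the finite set {ω_1, …, ω_K}. Then the PLT value Y = Σ_{i=1}^{K} (ᾱ z_{i,2} + α̲ z_{i,1}) / (ω_i x) satisfies Y = α/(τ x) exactly. (This is the exactness of the piecewise-linear reformulation of the nonconvex term α/(τx) appearing in the generalized branch flow.) -/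
open Finset

/-- A PLT (piecewise linear technique) configuration for `(α, τ)` with respect to
interval bounds `αlo ≤ αhi`, breakpoints `ω 1 < ⋯ < ω K`:
nonnegative weights `z i j` (`i = 1,…,K`, `j = 1,2`) and binary selectors
`y k` (`k = 1,…,K-1`) satisfying the PLT constraint system. -/
def IsPLT (K : ℕ) (ω : ℕ → ℝ) (αlo αhi : ℝ) (z : ℕ → ℕ → ℝ) (y : ℕ → ℝ)
    (α τ : ℝ) : Prop :=
  (∀ i ∈ Finset.Icc 1 K, ∀ j ∈ Finset.Icc 1 2, 0 ≤ z i j) ∧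
  (∀ k ∈ Finset.Icc 1 (K - 1), y k = 0 ∨ y k = 1) ∧
  ((∑ k ∈ Finset.Icc 1 (K - 1), y k) = 1) ∧
  ((∑ i ∈ Finset.Icc 1 K, (z i 1 + z i 2)) = 1) ∧
  (α = ∑ i ∈ Finset.Icc 1 K, (αhi * z i 2 + αlo * z i 1)) ∧
  (τ = ∑ i ∈ Finset.Icc 1 K, ω i * (z i 1 + z i 2)) ∧
  (∀ j ∈ Finset.Icc 1 2, z 1 j ≤ y 1) ∧
  (∀ j ∈ Finset.Icc 1 2, z K j ≤ y (K - 1)) ∧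
  (∀ l ∈ Finset.Icc 2 (K - 1), ∀ j ∈ Finset.Icc 1 2, z l j ≤ y (l - 1) + y l)

/-- The PLT value `Y = Σ_i (ᾱ z_{i,2} + α̲ z_{i,1}) / (ω_i x)` associated with a
PLT configuration. -/
noncomputable def PLTval (K : ℕ) (ω : ℕ → ℝ) (αlo αhi x : ℝ) (z : ℕ → ℕ → ℝ) : ℝ :=
  ∑ i ∈ Finset.Icc 1 K, (αhi * z i 2 + αlo * z i 1) / (ω i * x)

/-- Exactness of the PLT reformulation: if `(z, y, α, τ)` is a PLT configuration and
`τ` belongs to the finite breakpoint set `{ω 1, …, ω K}`, then the PLT value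
`Y = Σ_i (ᾱ z_{i,2} + α̲ z_{i,1})/(ω_i x)` equals `α/(τ x)` exactly. -/
theorem plt_value_exact (K : ℕ) (hK : 2 ≤ K) (ω : ℕ → ℝ)
    (hmono : ∀ i ∈ Finset.Icc 1 K, ∀ j ∈ Finset.Icc 1 K, i < j → ω i < ω j)
    (hω0 : ∀ i ∈ Finset.Icc 1 K, ω i ≠ 0)
    (αlo αhi : ℝ) (hα : αlo ≤ αhi) (x : ℝ) (hx : x ≠ 0)
    (z : ℕ → ℕ → ℝ) (y : ℕ → ℝ) (α τ : ℝ)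
    (hplt : IsPLT K ω αlo αhi z y α τ)
    (hτ : ∃ m ∈ Finset.Icc 1 K, τ = ω m) :
    PLTval K ω αlo αhi x z = α / (τ * x) := by
  obtain ⟨hz0, hybin, hysum, hzsum, hα', hτ', hz1, hzK, hmid⟩ := hplt
  obtain ⟨m, hmK, hτm⟩ := hτ
  have h1m : (1 : ℕ) ∈ Finset.Icc 1 2 := by decide
  have h2m : (2 : ℕ) ∈ Finset.Icc 1 2 := by decide
  -- there is a unique selected interval k0
  have hex : ∃ k0 ∈ Finset.Icc 1 (K - 1), y k0 = 1 := by
    by_contra h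
    push_neg at h
    have hall : ∀ k ∈ Finset.Icc 1 (K - 1), y k = 0 := fun k hk =>
      (hybin k hk).resolve_right (h k hk)
    rw [Finset.sum_eq_zero hall] at hysum
    norm_num at hysum
  obtain ⟨k0, hk0mem, hk0⟩ := hex
  have hy0 : ∀ k ∈ Finset.Icc 1 (K - 1), k ≠ k0 → y k = 0 := by
    have hsplit := Finset.add_sum_erase (Finset.Icc 1 (K - 1)) y hk0mem
    have hsum0 : ∑ k ∈ (Finset.Icc 1 (K - 1)).erase k0, y k = 0 := by
      rw [hysum, hk0] at hsplit; linarith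
    intro k hk hne
    have hnn : ∀ j ∈ (Finset.Icc 1 (K - 1)).erase k0, 0 ≤ y j := by
      intro j hj
      rcases hybin j (Finset.mem_of_mem_erase hj) with h' | h' <;> rw [h'] <;> norm_num
    exact (Finset.sum_eq_zero_iff_of_nonneg hnn).mp hsum0 k (Finset.mem_erase.mpr ⟨hne, hk⟩)
  rw [Finset.mem_Icc] at hk0mem hmK
  -- z vanishes off {k0, k0+1}
  have hzvan : ∀ i ∈ Finset.Icc 1 K, i ≠ k0 → i ≠ k0 + 1 → ∀ j ∈ Finset.Icc 1 2, z i j = 0 := by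
    intro i hi hne1 hne2 j hj
    have hnn := hz0 i hi j hj
    rw [Finset.mem_Icc] at hi
    rcases eq_or_ne i 1 with rfl | hi1
    · have hy1 : y 1 = 0 := hy0 1 (by rw [Finset.mem_Icc]; omega) (by omega)
      have := hz1 j hj; linarith
    rcases eq_or_ne i K with hiK | hiK
    · have hyK : y (K - 1) = 0 := hy0 (K - 1) (by rw [Finset.mem_Icc]; omega) (by omega)
      have := hzK j hj
      rw [hiK]; rw [hiK] at hnn; linarith
    · have hm1 : y (i - 1) = 0 := hy0 (i - 1) (by rw [Finset.mem_Icc]; omega) (by omega)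
      have hm2 : y i = 0 := hy0 i (by rw [Finset.mem_Icc]; omega) (by omega)
      have := hmid i (by rw [Finset.mem_Icc]; omega) j hj; linarith
  -- reduce sums to the pair {k0, k0+1}
  have hpair : ({k0, k0 + 1} : Finset ℕ) ⊆ Finset.Icc 1 K := by
    intro i hi
    simp only [Finset.mem_insert, Finset.mem_singleton] at hi
    rw [Finset.mem_Icc]
    rcases hi with rfl | rfl <;> omega
  have hreduce : ∀ f : ℕ → ℝ, (∀ i ∈ Finset.Icc 1 K, i ≠ k0 → i ≠ k0 + 1 → f i = 0) →
      ∑ i ∈ Finset.Icc 1 K, f i = f k0 + f (k0 + 1) := by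
    intro f hf
    rw [← Finset.sum_subset hpair (fun i hi hni => by
      simp only [Finset.mem_insert, Finset.mem_singleton, not_or] at hni
      exact hf i hi hni.1 hni.2)]
    exact Finset.sum_pair (by omega)
  have hk0K : k0 ∈ Finset.Icc 1 K := by rw [Finset.mem_Icc]; omega
  have hk1K : k0 + 1 ∈ Finset.Icc 1 K := by rw [Finset.mem_Icc]; omega
  have hzsum' : (z k0 1 + z k0 2) + (z (k0 + 1) 1 + z (k0 + 1) 2) = 1 := by
    rw [← hzsum]
    exact (hreduce (fun i => z i 1 + z i 2) (fun i hi h1 h2 => by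
      show z i 1 + z i 2 = 0
      rw [hzvan i hi h1 h2 1 h1m, hzvan i hi h1 h2 2 h2m]; ring)).symm
  have hτ'' : τ = ω k0 * (z k0 1 + z k0 2) + ω (k0 + 1) * (z (k0 + 1) 1 + z (k0 + 1) 2) := by
    rw [hτ']
    exact hreduce (fun i => ω i * (z i 1 + z i 2)) (fun i hi h1 h2 => by
      show ω i * (z i 1 + z i 2) = 0
      rw [hzvan i hi h1 h2 1 h1m, hzvan i hi h1 h2 2 h2m]; ring)
  have ha_nn : 0 ≤ z k0 1 + z k0 2 := by
    have := hz0 k0 hk0K 1 h1m; have := hz0 k0 hk0K 2 h2m; linarith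
  have hb_nn : 0 ≤ z (k0 + 1) 1 + z (k0 + 1) 2 := by
    have := hz0 (k0 + 1) hk1K 1 h1m; have := hz0 (k0 + 1) hk1K 2 h2m; linarith
  have hωlt : ω k0 < ω (k0 + 1) := hmono k0 hk0K (k0 + 1) hk1K (by omega)
  -- all mass concentrates at a single index i0 with τ = ω i0
  have hconc : ∃ i0 ∈ Finset.Icc 1 K, τ = ω i0 ∧
      ∀ i ∈ Finset.Icc 1 K, i ≠ i0 → z i 1 = 0 ∧ z i 2 = 0 := by
    rcases le_or_gt m k0 with hm | hm
    · -- mass at k0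
      have hωm : ω m ≤ ω k0 := by
        rcases eq_or_lt_of_le hm with h | hlt
        · exact le_of_eq (by rw [h])
        · exact le_of_lt (hmono m (by rw [Finset.mem_Icc]; omega) k0 hk0K hlt)
      have heq : ω k0 * (z k0 1 + z k0 2) + ω (k0 + 1) * (z (k0 + 1) 1 + z (k0 + 1) 2)
          = ω m := by rw [← hτ'', hτm]
      have hmul : ω k0 * (z k0 1 + z k0 2) + ω k0 * (z (k0 + 1) 1 + z (k0 + 1) 2)
          = ω k0 := by linear_combination ω k0 * hzsum'
      have hb0 : z (k0 + 1) 1 + z (k0 + 1) 2 = 0 := by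
        by_contra hb
        have hbpos : 0 < z (k0 + 1) 1 + z (k0 + 1) 2 := lt_of_le_of_ne hb_nn (Ne.symm hb)
        nlinarith [heq, hωm, hmul, mul_pos (sub_pos.mpr hωlt) hbpos]
      have hb1 : z (k0 + 1) 1 = 0 := by
        have := hz0 (k0 + 1) hk1K 1 h1m; have := hz0 (k0 + 1) hk1K 2 h2m; linarith
      have hb2 : z (k0 + 1) 2 = 0 := by
        have := hz0 (k0 + 1) hk1K 1 h1m; linarith
      refine ⟨k0, hk0K, ?_, ?_⟩
      · rw [hτ'', hb0]; have : z k0 1 + z k0 2 = 1 := by linarith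
        rw [this]; ring
      · intro i hi hne
        rcases eq_or_ne i (k0 + 1) with rfl | hne2
        · exact ⟨hb1, hb2⟩
        · exact ⟨hzvan i hi hne hne2 1 h1m, hzvan i hi hne hne2 2 h2m⟩
    · -- mass at k0+1
      have hωm : ω (k0 + 1) ≤ ω m := by
        rcases eq_or_ne (k0 + 1) m with h | hne
        · exact le_of_eq (by rw [h])
        · exact le_of_lt (hmono (k0 + 1) hk1K m (by rw [Finset.mem_Icc]; omega) (by omega))
      have heq : ω k0 * (z k0 1 + z k0 2) + ω (k0 + 1) * (z (k0 + 1) 1 + z (k0 + 1) 2)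
          = ω m := by rw [← hτ'', hτm]
      have hmul : ω (k0 + 1) * (z k0 1 + z k0 2) + ω (k0 + 1) * (z (k0 + 1) 1 + z (k0 + 1) 2)
          = ω (k0 + 1) := by linear_combination ω (k0 + 1) * hzsum'
      have ha0 : z k0 1 + z k0 2 = 0 := by
        by_contra ha'
        have hapos : 0 < z k0 1 + z k0 2 := lt_of_le_of_ne ha_nn (Ne.symm ha')
        nlinarith [heq, hωm, hmul, mul_pos (sub_pos.mpr hωlt) hapos]
      have ha1 : z k0 1 = 0 := by
        have := hz0 k0 hk0K 1 h1m; have := hz0 k0 hk0K 2 h2m; linarith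
      have ha2 : z k0 2 = 0 := by
        have := hz0 k0 hk0K 1 h1m; linarith
      refine ⟨k0 + 1, hk1K, ?_, ?_⟩
      · rw [hτ'', ha0]; have : z (k0 + 1) 1 + z (k0 + 1) 2 = 1 := by linarith
        rw [this]; ring
      · intro i hi hne
        rcases eq_or_ne i k0 with rfl | hne2
        · exact ⟨ha1, ha2⟩
        · exact ⟨hzvan i hi hne2 hne 1 h1m, hzvan i hi hne2 hne 2 h2m⟩
  obtain ⟨i0, hi0K, hτ0, hzero⟩ := hconc
  -- collapse both sums to the single index i0
  rw [PLTval, Finset.sum_eq_single_of_mem i0 hi0K (fun i hi hne => by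
    obtain ⟨e1, e2⟩ := hzero i hi hne; rw [e1, e2]; simp),
    hα', Finset.sum_eq_single_of_mem i0 hi0K (fun i hi hne => by
    obtain ⟨e1, e2⟩ := hzero i hi hne; rw [e1, e2]; ring), hτ0]
end

section
/- Fix an integer K ≥ 2, strictly increasing nonzero reals ω_1 < ω_2 < ⋯ < ω_K, reals α̲ ≤ ᾱ, and a real x ≠ 0. For every α with α̲ ≤ α ≤ ᾱ and every τ ∈ {ω_1, …, ω_K}, there exists a PLT configuration (z, y, α, τ) whose PLT value Y = Σ_{i=1}^{K} (ᾱ z_{i,2} + α̲ z_{i,1})/(ω_i x) equals α/(τ x). (Together with exactness, this shows the mixed-integer linear PLT system represents the graph of (α, τ) ↦ α/(τx) over the box-times-finite-set domain exactly.) -/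
open Finset

/-- Feasibility of the PLT reformulation: for every `α` in the box `[α̲, ᾱ]` and every
`τ` in the finite breakpoint set `{ω 1, …, ω K}`, there exists a PLT configuration
whose PLT value equals `α/(τ x)`. -/
theorem plt_representation_exists (K : ℕ) (hK : 2 ≤ K) (ω : ℕ → ℝ)
    (hmono : ∀ i ∈ Finset.Icc 1 K, ∀ j ∈ Finset.Icc 1 K, i < j → ω i < ω j)
    (hω0 : ∀ i ∈ Finset.Icc 1 K, ω i ≠ 0)
    (αlo αhi : ℝ) (hα : αlo ≤ αhi) (x : ℝ) (hx : x ≠ 0)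
    (α τ : ℝ) (hα1 : αlo ≤ α) (hα2 : α ≤ αhi)
    (hτ : ∃ m ∈ Finset.Icc 1 K, τ = ω m) :
    ∃ (z : ℕ → ℕ → ℝ) (y : ℕ → ℝ),
      IsPLT K ω αlo αhi z y α τ ∧ PLTval K ω αlo αhi x z = α / (τ * x) := by
  classical
  obtain ⟨m, hmmem, hτm⟩ := hτ
  rw [Finset.mem_Icc] at hmmem
  obtain ⟨hm1, hmK⟩ := hmmem
  have hmem : m ∈ Finset.Icc 1 K := Finset.mem_Icc.mpr ⟨hm1, hmK⟩
  set t : ℝ := if αhi = αlo then 1 else (αhi - α) / (αhi - αlo) with htdef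
  have ht0 : 0 ≤ t := by
    by_cases h : αhi = αlo
    · simp [htdef, h]
    · have hd : 0 < αhi - αlo := lt_of_le_of_ne (by linarith)
        (fun hc => h (by linarith))
      rw [htdef, if_neg h]
      exact div_nonneg (by linarith) hd.le
  have ht1 : t ≤ 1 := by
    by_cases h : αhi = αlo
    · simp [htdef, h]
    · have hd : 0 < αhi - αlo := lt_of_le_of_ne (by linarith)
        (fun hc => h (by linarith))
      rw [htdef, if_neg h]
      rw [div_le_one hd]; linarith
  have hsum : αhi * (1 - t) + αlo * t = α := by
    by_cases h : αhi = αlo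
    · have : α = αlo := le_antisymm (h ▸ hα2) hα1
      simp [htdef, h, this]
    · have hd : αhi - αlo ≠ 0 := fun hc => h (by linarith)
      rw [htdef, if_neg h]
      field_simp
      ring
  set k := min m (K - 1) with hkdef
  have hk1 : 1 ≤ k := le_min hm1 (by omega)
  have hkK : k ≤ K - 1 := min_le_right _ _
  set z : ℕ → ℕ → ℝ := fun i j =>
    if i = m ∧ j = 1 then t else if i = m ∧ j = 2 then 1 - t else 0 with hz
  set y : ℕ → ℝ := fun l => if l = k then 1 else 0 with hy
  have hzle : ∀ i j, z i j ≤ 1 := by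
    intro i j; simp only [hz]; split_ifs <;> linarith
  have hz0 : ∀ i j, 0 ≤ z i j := by
    intro i j; simp only [hz]; split_ifs <;> linarith
  have hy0 : ∀ l, 0 ≤ y l := by
    intro l; simp only [hy]; split_ifs <;> norm_num
  have hzne : ∀ i, i ≠ m → ∀ j, z i j = 0 := by
    intro i hi j; simp [hz, hi]
  have hz1 : z m 1 = t := by simp [hz]
  have hz2 : z m 2 = 1 - t := by norm_num [hz]
  refine ⟨z, y, ⟨fun i _ j _ => hz0 i j, ?_, ?_, ?_, ?_, ?_, ?_, ?_, ?_⟩, ?_⟩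
  · intro l _; simp only [hy]; split_ifs <;> simp
  · rw [hy]
    rw [Finset.sum_ite_eq' (Finset.Icc 1 (K - 1)) k (fun _ => (1:ℝ))]
    rw [if_pos (Finset.mem_Icc.mpr ⟨hk1, hkK⟩)]
  · rw [Finset.sum_eq_single_of_mem m hmem (fun b _ hb => by simp [hzne b hb])]
    rw [hz1, hz2]; ring
  · rw [Finset.sum_eq_single_of_mem m hmem (fun b _ hb => by simp [hzne b hb])]
    rw [hz1, hz2]; linarith
  · rw [Finset.sum_eq_single_of_mem m hmem (fun b _ hb => by simp [hzne b hb])]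
    rw [hz1, hz2, hτm]; ring
  · intro j hj
    by_cases h1 : 1 = m
    · have hk' : k = 1 := by omega
      have : y 1 = 1 := by simp [hy, hk']
      rw [this]; exact hzle 1 j
    · rw [hzne 1 h1 j]; exact hy0 1
  · intro j hj
    by_cases h1 : K = m
    · have hk' : k = K - 1 := by omega
      have : y (K - 1) = 1 := by simp [hy, hk']
      rw [this]; exact hzle K j
    · rw [hzne K h1 j]; exact hy0 _
  · intro l hl j hj
    rw [Finset.mem_Icc] at hl
    by_cases h1 : l = m
    · have hk' : k = l := by omega
      have : y l = 1 := by simp [hy, hk']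
      rw [this]
      have := hzle l j
      have := hy0 (l - 1)
      linarith
    · rw [hzne l h1 j]
      have := hy0 (l - 1); have := hy0 l; linarith
  · rw [PLTval]
    rw [Finset.sum_eq_single_of_mem m hmem (fun b _ hb => by simp [hzne b hb])]
    rw [hz1, hz2, hsum, hτm]
end

section
/- Fix an integer K ≥ 2, strictly increasing nonzero reals ω_1 < ω_2 < ⋯ < ω_K, a real x ≠ 0, a common value τ ∈ {ω_1, …, ω_K}, and three bounded intervals [θ̲_m, θ̄_m], [θ̲_n, θ̄_n], [δ̲, δ̄]. Suppose (z^{θ_m}, y^{(1)}, θ_m, τ), (z^{θ_n}, y^{(2)}, θ_n, τ) and (z^{δ}, y^{(3)}, δ, τ) are PLT configurations (each with respect to its own interval bounds but with the same breakpoints ω_i, the same x, and the same τ). Then the combined quantity P = Y(θ_m) − Y(θ_n) − Y(δ), where Y(α) denotes the PLT value of the corresponding configuration, satisfies P = (θ_m − θ_n − δ)/(τ x) exactly. (This is the exact MILP representation of the DC power flow through a branch with adjustable transformer ratio τ and phase-shift angle δ.) -/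
open Finset

lemma plt_support (K : ℕ) (hK : 2 ≤ K) (ω : ℕ → ℝ)
    (hmono : ∀ i ∈ Finset.Icc 1 K, ∀ j ∈ Finset.Icc 1 K, i < j → ω i < ω j)
    (τ : ℝ) (hτ : ∃ m ∈ Finset.Icc 1 K, τ = ω m)
    (αlo αhi : ℝ) (z : ℕ → ℕ → ℝ) (y : ℕ → ℝ) (α : ℝ)
    (h : IsPLT K ω αlo αhi z y α τ) :
    ∀ i ∈ Finset.Icc 1 K, (z i 1 = 0 ∧ z i 2 = 0) ∨ ω i = τ := by
  obtain ⟨hz, hy, hsy, hsz, hα, hτeq, hc1, hcK, hmid⟩ := h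
  -- find the unique k0 with y k0 = 1
  have hex : ∃ k0 ∈ Finset.Icc 1 (K - 1), y k0 = 1 := by
    by_contra hcon
    push_neg at hcon
    have : (∑ k ∈ Finset.Icc 1 (K - 1), y k) = 0 := by
      apply Finset.sum_eq_zero
      intro k hk
      rcases hy k hk with h0 | h1
      · exact h0
      · exact absurd h1 (hcon k hk)
    rw [this] at hsy; norm_num at hsy
  obtain ⟨k0, hk0mem, hk0⟩ := hex
  have hyz : ∀ k ∈ Finset.Icc 1 (K - 1), k ≠ k0 → y k = 0 := by
    have hsplit := Finset.add_sum_erase _ y hk0mem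
    rw [hsy, hk0] at hsplit
    have hz0 : (∑ k ∈ (Finset.Icc 1 (K - 1)).erase k0, y k) = 0 := by linarith
    intro k hk hne
    have hkmem : k ∈ (Finset.Icc 1 (K - 1)).erase k0 := Finset.mem_erase.mpr ⟨hne, hk⟩
    have hnn : ∀ k ∈ (Finset.Icc 1 (K - 1)).erase k0, 0 ≤ y k := by
      intro j hj
      rcases hy j (Finset.mem_of_mem_erase hj) with h0 | h1
      · rw [h0]
      · rw [h1]; norm_num
    exact (Finset.sum_eq_zero_iff_of_nonneg hnn).mp hz0 k hkmem
  obtain ⟨hk01, hk0K⟩ := Finset.mem_Icc.mp hk0mem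
  -- z is zero outside {k0, k0+1}
  have hzero : ∀ i ∈ Finset.Icc 1 K, i ≠ k0 → i ≠ k0 + 1 → z i 1 = 0 ∧ z i 2 = 0 := by
    intro i hi hne1 hne2
    obtain ⟨hi1, hiK⟩ := Finset.mem_Icc.mp hi
    have hbound : ∀ j ∈ Finset.Icc 1 2, z i j ≤ 0 := by
      intro j hj
      rcases eq_or_ne i 1 with rfl | hne1'
      · have : y 1 = 0 := hyz 1 (Finset.mem_Icc.mpr ⟨le_refl 1, by omega⟩) (by omega)
        have := hc1 j hj; linarith
      · rcases eq_or_ne i K with hiK' | hneK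
        · have hyK : y (K - 1) = 0 := hyz (K - 1) (Finset.mem_Icc.mpr ⟨by omega, le_refl _⟩) (by omega)
          have := hcK j hj
          rw [hiK']
          linarith
        · have hmem : i ∈ Finset.Icc 2 (K - 1) := Finset.mem_Icc.mpr ⟨by omega, by omega⟩
          have h1 : y (i - 1) = 0 := hyz (i - 1) (Finset.mem_Icc.mpr ⟨by omega, by omega⟩) (by omega)
          have h2 : y i = 0 := hyz i (Finset.mem_Icc.mpr ⟨by omega, by omega⟩) (by omega)
          have := hmid i hmem j hj; linarith
    constructor
    · exact le_antisymm (hbound 1 (by simp)) (hz i hi 1 (by simp))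
    · exact le_antisymm (hbound 2 (by simp)) (hz i hi 2 (by simp))
  -- pair sums
  have hk0K' : k0 ∈ Finset.Icc 1 K := Finset.mem_Icc.mpr ⟨hk01, by omega⟩
  have hk1K' : k0 + 1 ∈ Finset.Icc 1 K := Finset.mem_Icc.mpr ⟨by omega, by omega⟩
  have hne : k0 ≠ k0 + 1 := by omega
  have hsub : ({k0, k0 + 1} : Finset ℕ) ⊆ Finset.Icc 1 K := by
    intro a ha
    rcases Finset.mem_insert.mp ha with rfl | ha
    · exact hk0K'
    · rw [Finset.mem_singleton.mp ha]; exact hk1K'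
  set s1 := z k0 1 + z k0 2 with hs1def
  set s2 := z (k0 + 1) 1 + z (k0 + 1) 2 with hs2def
  have hsum1 : s1 + s2 = 1 := by
    rw [← hsz]
    rw [← Finset.sum_subset hsub (fun i hi hni => by
      have hni1 : i ≠ k0 := fun h => hni (by simp [h])
      have hni2 : i ≠ k0 + 1 := fun h => hni (by simp [h])
      obtain ⟨hza, hzb⟩ := hzero i hi hni1 hni2
      rw [hza, hzb]; ring)]
    rw [Finset.sum_pair hne]
  have hτ2 : τ = ω k0 * s1 + ω (k0 + 1) * s2 := by
    rw [hτeq]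
    rw [← Finset.sum_subset hsub (fun i hi hni => by
      have hni1 : i ≠ k0 := fun h => hni (by simp [h])
      have hni2 : i ≠ k0 + 1 := fun h => hni (by simp [h])
      obtain ⟨hza, hzb⟩ := hzero i hi hni1 hni2
      rw [hza, hzb]; ring)]
    rw [Finset.sum_pair hne]
  have hs1nn : 0 ≤ s1 := add_nonneg (hz k0 hk0K' 1 (by simp)) (hz k0 hk0K' 2 (by simp))
  have hs2nn : 0 ≤ s2 := add_nonneg (hz (k0+1) hk1K' 1 (by simp)) (hz (k0+1) hk1K' 2 (by simp))
  have hωlt : ω k0 < ω (k0 + 1) := hmono k0 hk0K' (k0 + 1) hk1K' (by omega)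
  -- case analysis
  rcases eq_or_lt_of_le hs2nn with hs2z | hs2pos
  · -- s2 = 0, so τ = ω k0 and support is {k0}
    have hs2z : s2 = 0 := hs2z.symm
    have hτk0 : ω k0 = τ := by rw [hτ2, hs2z]; have : s1 = 1 := by linarith
                               rw [this]; ring
    have hz1 : z (k0 + 1) 1 = 0 ∧ z (k0 + 1) 2 = 0 := by
      have h1 := hz (k0+1) hk1K' 1 (by simp)
      have h2 := hz (k0+1) hk1K' 2 (by simp)
      have hs : z (k0 + 1) 1 + z (k0 + 1) 2 = 0 := hs2def.symm.trans hs2z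
      exact ⟨by linarith, by linarith⟩
    intro i hi
    rcases eq_or_ne i k0 with rfl | hne1
    · exact Or.inr hτk0
    rcases eq_or_ne i (k0 + 1) with rfl | hne2
    · exact Or.inl hz1
    · exact Or.inl (hzero i hi hne1 hne2)
  rcases eq_or_lt_of_le hs1nn with hs1z | hs1pos
  · have hs1z : s1 = 0 := hs1z.symm
    have hτk1 : ω (k0 + 1) = τ := by rw [hτ2, hs1z]; have : s2 = 1 := by linarith
                                     rw [this]; ring
    have hz1 : z k0 1 = 0 ∧ z k0 2 = 0 := by
      have h1 := hz k0 hk0K' 1 (by simp)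
      have h2 := hz k0 hk0K' 2 (by simp)
      have hs : z k0 1 + z k0 2 = 0 := hs1def.symm.trans hs1z
      exact ⟨by linarith, by linarith⟩
    intro i hi
    rcases eq_or_ne i (k0 + 1) with rfl | hne2
    · exact Or.inr hτk1
    rcases eq_or_ne i k0 with rfl | hne1
    · exact Or.inl hz1
    · exact Or.inl (hzero i hi hne1 hne2)
  · -- both positive: contradiction with τ = ω m
    exfalso
    obtain ⟨m, hm, hτm⟩ := hτ
    obtain ⟨hm1, hmK⟩ := Finset.mem_Icc.mp hm
    have hs1e : s1 = 1 - s2 := by linarith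
    have hτ3 : τ - ω k0 = (ω (k0 + 1) - ω k0) * s2 := by rw [hτ2, hs1e]; ring
    have hτ4 : ω (k0 + 1) - τ = (ω (k0 + 1) - ω k0) * s1 := by rw [hτ2, hs1e]; ring
    have hlo : ω k0 < τ := by
      have := mul_pos (sub_pos.mpr hωlt) hs2pos; linarith
    have hhi : τ < ω (k0 + 1) := by
      have := mul_pos (sub_pos.mpr hωlt) hs1pos; linarith
    rcases le_or_gt m k0 with hle | hlt
    · rcases eq_or_lt_of_le hle with rfl | hlt'
      · linarith [hτm]
      · have := hmono m hm k0 hk0K' hlt'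
        linarith [hτm]
    · have hge : k0 + 1 ≤ m := hlt
      rcases eq_or_lt_of_le hge with h' | hlt'
      · rw [← h'] at hτm; linarith
      · have := hmono (k0 + 1) hk1K' m hm hlt'
        linarith [hτm]

lemma plt_val (K : ℕ) (ω : ℕ → ℝ) (αlo αhi x : ℝ) (z : ℕ → ℕ → ℝ) (y : ℕ → ℝ)
    (α τ : ℝ) (h : IsPLT K ω αlo αhi z y α τ)
    (hsupp : ∀ i ∈ Finset.Icc 1 K, (z i 1 = 0 ∧ z i 2 = 0) ∨ ω i = τ) :
    PLTval K ω αlo αhi x z = α / (τ * x) := by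
  obtain ⟨-, -, -, -, hα, -, -, -, -⟩ := h
  rw [PLTval, hα, Finset.sum_div]
  apply Finset.sum_congr rfl
  intro i hi
  rcases hsupp i hi with ⟨h1, h2⟩ | hω
  · simp [h1, h2]
  · rw [hω]

/-- Exact MILP representation of the DC power flow through a branch with adjustable
transformer ratio `τ` and phase shifter `δ`: given PLT configurations for `θm`, `θn`
and `δ` (with the same breakpoints `ω`, same `x`, and the same `τ ∈ {ω 1, …, ω K}`),
the combined quantity `P = Y(θm) - Y(θn) - Y(δ)` equals `(θm - θn - δ)/(τ x)` exactly. -/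
theorem plt_branch_flow_exact (K : ℕ) (hK : 2 ≤ K) (ω : ℕ → ℝ)
    (hmono : ∀ i ∈ Finset.Icc 1 K, ∀ j ∈ Finset.Icc 1 K, i < j → ω i < ω j)
    (hω0 : ∀ i ∈ Finset.Icc 1 K, ω i ≠ 0)
    (x : ℝ) (hx : x ≠ 0)
    (τ : ℝ) (hτ : ∃ m ∈ Finset.Icc 1 K, τ = ω m)
    (θmlo θmhi θnlo θnhi δlo δhi : ℝ)
    (hθm : θmlo ≤ θmhi) (hθn : θnlo ≤ θnhi) (hδ : δlo ≤ δhi)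
    (zm zn zd : ℕ → ℕ → ℝ) (y₁ y₂ y₃ : ℕ → ℝ) (θm θn δ : ℝ)
    (h₁ : IsPLT K ω θmlo θmhi zm y₁ θm τ)
    (h₂ : IsPLT K ω θnlo θnhi zn y₂ θn τ)
    (h₃ : IsPLT K ω δlo δhi zd y₃ δ τ) :
    PLTval K ω θmlo θmhi x zm - PLTval K ω θnlo θnhi x zn - PLTval K ω δlo δhi x zd =
      (θm - θn - δ) / (τ * x) := by
  rw [plt_val K ω θmlo θmhi x zm y₁ θm τ h₁ (plt_support K hK ω hmono τ hτ θmlo θmhi zm y₁ θm h₁),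
      plt_val K ω θnlo θnhi x zn y₂ θn τ h₂ (plt_support K hK ω hmono τ hτ θnlo θnhi zn y₂ θn h₂),
      plt_val K ω δlo δhi x zd y₃ δ τ h₃ (plt_support K hK ω hmono τ hτ δlo δhi zd y₃ δ h₃)]
  ring
end

section
/- Fix an integer K ≥ 2, a real exponent λ, strictly increasing positive reals ω_1 < ω_2 < ⋯ < ω_K, and reals a ≤ b. Suppose nonnegative reals z_{i,j} (i = 1,…,K; j = 1,2) and values y_k ∈ {0,1} (k = 1,…,K−1) satisfy: Σ_k y_k = 1; Σ_{i,j} z_{i,j} = 1; z_{1,j} ≤ y_1 and z_{K,j} ≤ y_{K−1} for j = 1,2; z_{l,j} ≤ y_{l−1} + y_l for 2 ≤ l ≤ K−1 and j = 1,2; and set y* = Σ_i (b z_{i,2} + a z_{i,1}) and x* = Σ_i ω_i (z_{i,1} + z_{i,2}). If additionally x* ∈ {ω_1, …, ω_K}, then Σ_{i=1}^{K} ω_i^λ (b z_{i,2} + a z_{i,1}) = (x*)^λ · y*. (This is the paper's general claim that any product z = x^λ y, with λ a known constant, x a discrete variable in a finite set and y a continuous variable in a box, is exactly linearized by the piecewise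 linear technique: the linearized expression recovers x^λ y exactly on every feasible point.) -/
/-- The general exactness claim of the piecewise linear technique: for any known real
exponent `λ`, a discrete variable `x* ∈ {ω 1, …, ω K}` (positive, strictly increasing
breakpoints) and a continuous variable `y* ∈ [a, b]`, any feasible point of the PLT
constraint system satisfies `Σ_i ω_i^λ (b z_{i,2} + a z_{i,1}) = (x*)^λ · y*`, i.e. the
linearized expression recovers the product `x^λ y` exactly. -/
theorem plt_power_product_exact (K : ℕ) (hK : 2 ≤ K) (lam : ℝ) (ω : ℕ → ℝ)
    (hpos : ∀ i ∈ Finset.Icc 1 K, 0 < ω i)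
    (hmono : ∀ i ∈ Finset.Icc 1 K, ∀ j ∈ Finset.Icc 1 K, i < j → ω i < ω j)
    (a b : ℝ) (hab : a ≤ b)
    (z : ℕ → ℕ → ℝ) (y : ℕ → ℝ)
    (hz : ∀ i ∈ Finset.Icc 1 K, ∀ j ∈ Finset.Icc 1 2, 0 ≤ z i j)
    (hy : ∀ k ∈ Finset.Icc 1 (K - 1), y k = 0 ∨ y k = 1)
    (hy1 : (∑ k ∈ Finset.Icc 1 (K - 1), y k) = 1)
    (hz1 : (∑ i ∈ Finset.Icc 1 K, (z i 1 + z i 2)) = 1)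
    (hfirst : ∀ j ∈ Finset.Icc 1 2, z 1 j ≤ y 1)
    (hlast : ∀ j ∈ Finset.Icc 1 2, z K j ≤ y (K - 1))
    (hmid : ∀ l ∈ Finset.Icc 2 (K - 1), ∀ j ∈ Finset.Icc 1 2, z l j ≤ y (l - 1) + y l)
    (ystar xstar : ℝ)
    (hystar : ystar = ∑ i ∈ Finset.Icc 1 K, (b * z i 2 + a * z i 1))
    (hxstar : xstar = ∑ i ∈ Finset.Icc 1 K, ω i * (z i 1 + z i 2))
    (hxmem : ∃ m ∈ Finset.Icc 1 K, xstar = ω m) :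
    (∑ i ∈ Finset.Icc 1 K, ω i ^ lam * (b * z i 2 + a * z i 1)) = xstar ^ lam * ystar := by
  -- Step 1: there is a unique k₀ with y k₀ = 1
  obtain ⟨k₀, hk₀mem, hk₀⟩ : ∃ k ∈ Finset.Icc 1 (K - 1), y k = 1 := by
    by_contra h
    push_neg at h
    have h0 : ∀ k ∈ Finset.Icc 1 (K - 1), y k = 0 := fun k hk =>
      (hy k hk).resolve_right (h k hk)
    rw [Finset.sum_eq_zero h0] at hy1
    norm_num at hy1
  have hyzero : ∀ k ∈ Finset.Icc 1 (K - 1), k ≠ k₀ → y k = 0 := by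
    intro k hk hne
    have hsum : y k₀ + ∑ j ∈ (Finset.Icc 1 (K - 1)).erase k₀, y j
        = ∑ j ∈ Finset.Icc 1 (K - 1), y j := Finset.add_sum_erase _ y hk₀mem
    rw [hy1, hk₀] at hsum
    have hz0 : ∑ j ∈ (Finset.Icc 1 (K - 1)).erase k₀, y j = 0 := by linarith
    have hnn : ∀ j ∈ (Finset.Icc 1 (K - 1)).erase k₀, 0 ≤ y j := by
      intro j hj
      rcases hy j (Finset.mem_of_mem_erase hj) with h | h <;> simp [h]
    have := (Finset.sum_eq_zero_iff_of_nonneg hnn).mp hz0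
    exact this k (Finset.mem_erase.mpr ⟨hne, hk⟩)
  simp only [Finset.mem_Icc] at hk₀mem
  -- Step 2: z vanishes outside {k₀, k₀+1}
  have hzzero : ∀ i ∈ Finset.Icc 1 K, ∀ j ∈ Finset.Icc 1 2,
      i ≠ k₀ → i ≠ k₀ + 1 → z i j = 0 := by
    intro i hi j hj hne1 hne2
    simp only [Finset.mem_Icc] at hi
    have hnn := hz i (Finset.mem_Icc.mpr hi) j hj
    have hub : z i j ≤ 0 := by
      rcases Nat.lt_or_ge i 2 with h1 | h1
      · -- i = 1
        have hi1 : i = 1 := by omega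
        have hy10 : y 1 = 0 := hyzero 1 (Finset.mem_Icc.mpr (by omega)) (by omega)
        have := hfirst j hj
        rw [hy10] at this
        rw [hi1]
        exact this
      · rcases Nat.lt_or_ge i K with h2 | h2
        · -- 2 ≤ i ≤ K-1
          have hya : y (i - 1) = 0 :=
            hyzero (i - 1) (Finset.mem_Icc.mpr (by omega)) (by omega)
          have hyb : y i = 0 := hyzero i (Finset.mem_Icc.mpr (by omega)) (by omega)
          have := hmid i (Finset.mem_Icc.mpr (by omega)) j hj
          rw [hya, hyb] at this
          linarith
        · -- i = K
          have hiK : i = K := by omega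
          have hyK : y (K - 1) = 0 :=
            hyzero (K - 1) (Finset.mem_Icc.mpr (by omega)) (by omega)
          have := hlast j hj
          rw [hyK] at this
          rw [hiK]
          exact this
    linarith
  have hzzero' : ∀ i ∈ Finset.Icc 1 K, i ≠ k₀ → i ≠ k₀ + 1 →
      z i 1 = 0 ∧ z i 2 = 0 := by
    intro i hi h1 h2
    exact ⟨hzzero i hi 1 (by simp) h1 h2, hzzero i hi 2 (by simp) h1 h2⟩
  -- generic reduction of sums over Icc 1 K to the two indices k₀, k₀+1
  have hk₀K : k₀ ∈ Finset.Icc 1 K := Finset.mem_Icc.mpr ⟨hk₀mem.1, by omega⟩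
  have hk₁K : k₀ + 1 ∈ Finset.Icc 1 K := Finset.mem_Icc.mpr ⟨by omega, by omega⟩
  have key : ∀ f : ℕ → ℝ, (∀ i ∈ Finset.Icc 1 K, i ≠ k₀ → i ≠ k₀ + 1 → f i = 0) →
      (∑ i ∈ Finset.Icc 1 K, f i) = f k₀ + f (k₀ + 1) := by
    intro f hf
    have hsub : ({k₀, k₀ + 1} : Finset ℕ) ⊆ Finset.Icc 1 K := by
      intro x hx
      simp only [Finset.mem_insert, Finset.mem_singleton] at hx
      rcases hx with rfl | rfl
      · exact hk₀K
      · exact hk₁K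
    rw [← Finset.sum_subset hsub (by
      intro x hx hnx
      simp only [Finset.mem_insert, Finset.mem_singleton, not_or] at hnx
      exact hf x hx hnx.1 hnx.2)]
    rw [Finset.sum_pair (by omega)]
  have hS : z k₀ 1 + z k₀ 2 + (z (k₀ + 1) 1 + z (k₀ + 1) 2) = 1 := by
    rw [← key (fun i => z i 1 + z i 2) (by
      intro i hi h1 h2
      obtain ⟨e1, e2⟩ := hzzero' i hi h1 h2
      simp [e1, e2])]
    exact hz1
  have hX : xstar = ω k₀ * (z k₀ 1 + z k₀ 2) + ω (k₀ + 1) * (z (k₀ + 1) 1 + z (k₀ + 1) 2) := by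
    rw [hxstar, key (fun i => ω i * (z i 1 + z i 2)) (by
      intro i hi h1 h2
      obtain ⟨e1, e2⟩ := hzzero' i hi h1 h2
      simp [e1, e2])]
  have hY : ystar = (b * z k₀ 2 + a * z k₀ 1) + (b * z (k₀ + 1) 2 + a * z (k₀ + 1) 1) := by
    rw [hystar, key (fun i => b * z i 2 + a * z i 1) (by
      intro i hi h1 h2
      obtain ⟨e1, e2⟩ := hzzero' i hi h1 h2
      simp [e1, e2])]
  have hL : (∑ i ∈ Finset.Icc 1 K, ω i ^ lam * (b * z i 2 + a * z i 1))
      = ω k₀ ^ lam * (b * z k₀ 2 + a * z k₀ 1)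
        + ω (k₀ + 1) ^ lam * (b * z (k₀ + 1) 2 + a * z (k₀ + 1) 1) := by
    rw [key (fun i => ω i ^ lam * (b * z i 2 + a * z i 1)) (by
      intro i hi h1 h2
      obtain ⟨e1, e2⟩ := hzzero' i hi h1 h2
      simp [e1, e2])]
  -- nonnegativity of the four relevant z's
  have hz01 := hz k₀ hk₀K 1 (by simp)
  have hz02 := hz k₀ hk₀K 2 (by simp)
  have hz11 := hz (k₀ + 1) hk₁K 1 (by simp)
  have hz12 := hz (k₀ + 1) hk₁K 2 (by simp)
  have hlt : ω k₀ < ω (k₀ + 1) := hmono k₀ hk₀K (k₀ + 1) hk₁K (by omega)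
  -- Step 3: one of the two groups vanishes
  have hdisj : z k₀ 1 + z k₀ 2 = 0 ∨ z (k₀ + 1) 1 + z (k₀ + 1) 2 = 0 := by
    by_contra h
    push_neg at h
    obtain ⟨h1, h2⟩ := h
    have hp1 : 0 < z k₀ 1 + z k₀ 2 := lt_of_le_of_ne (by linarith) (Ne.symm h1)
    have hp2 : 0 < z (k₀ + 1) 1 + z (k₀ + 1) 2 := lt_of_le_of_ne (by linarith) (Ne.symm h2)
    have hid1 : ω k₀ * (z k₀ 1 + z k₀ 2) + ω (k₀ + 1) * (z (k₀ + 1) 1 + z (k₀ + 1) 2) - ω k₀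
        = (ω (k₀ + 1) - ω k₀) * (z (k₀ + 1) 1 + z (k₀ + 1) 2) := by
      linear_combination (ω k₀) * hS
    have hid2 : ω (k₀ + 1) - (ω k₀ * (z k₀ 1 + z k₀ 2) + ω (k₀ + 1) * (z (k₀ + 1) 1 + z (k₀ + 1) 2))
        = (ω (k₀ + 1) - ω k₀) * (z k₀ 1 + z k₀ 2) := by
      linear_combination (-(ω (k₀ + 1))) * hS
    have hlb : ω k₀ < xstar := by
      rw [hX]; linarith [mul_pos (sub_pos.mpr hlt) hp2]
    have hub : xstar < ω (k₀ + 1) := by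
      rw [hX]; linarith [mul_pos (sub_pos.mpr hlt) hp1]
    obtain ⟨m, hm, hxm⟩ := hxmem
    rcases Nat.lt_or_ge m (k₀ + 1) with hmle | hmge
    · have : ω m ≤ ω k₀ := by
        rcases Nat.lt_or_ge m k₀ with h | h
        · exact le_of_lt (hmono m hm k₀ hk₀K h)
        · have : m = k₀ := by omega
          rw [this]
      linarith [hxm ▸ hlb]
    · have : ω (k₀ + 1) ≤ ω m := by
        rcases Nat.lt_or_ge (k₀ + 1) m with h | h
        · exact le_of_lt (hmono (k₀ + 1) hk₁K m hm h)
        · have : m = k₀ + 1 := by omega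
          rw [this]
      linarith [hxm ▸ hub]
  rcases hdisj with h0 | h0
  · -- support at k₀+1
    have e1 : z k₀ 1 = 0 := by linarith
    have e2 : z k₀ 2 = 0 := by linarith
    have hs : z (k₀ + 1) 1 + z (k₀ + 1) 2 = 1 := by linarith
    have hx : xstar = ω (k₀ + 1) := by rw [hX, e1, e2, hs]; ring
    rw [hL, hY, hx, e1, e2]; ring
  · -- support at k₀
    have e1 : z (k₀ + 1) 1 = 0 := by linarith
    have e2 : z (k₀ + 1) 2 = 0 := by linarith
    have hs : z k₀ 1 + z k₀ 2 = 1 := by linarith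
    have hx : xstar = ω k₀ := by rw [hX, e1, e2, hs]; ring
    rw [hL, hY, hx, e1, e2]; ring
end

section
/- Fix an integer K ≥ 2, a real exponent λ, strictly increasing positive reals ω_1 < ω_2 < ⋯ < ω_K, and reals a ≤ b. For every y ∈ [a, b] and every x ∈ {ω_1, …, ω_K}, there exist nonnegative reals z_{i,j} (i = 1,…,K; j = 1,2) and values y_k ∈ {0,1} (k = 1,…,K−1) satisfying Σ_k y_k = 1; Σ_{i,j} z_{i,j} = 1; z_{1,j} ≤ y_1 and z_{K,j} ≤ y_{K−1} for j = 1,2; z_{l,j} ≤ y_{l−1} + y_l for 2 ≤ l ≤ K−1 and j = 1,2; y = Σ_i (b z_{i,2} + a z_{i,1}); x = Σ_i ω_i (z_{i,1} + z_{i,2}); and Σ_{i=1}^{K} ω_i^λ (b z_{i,2} + a z_{i,1}) = x^λ y. (This is the feasibility half of the paper's general claim that z = x^λ y, with x discrete in a finite set and y continuous in a box, is exactly representable by the mixed-integer linear PLT system.) -/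
/-- The feasibility half of the general PLT claim: for any known real exponent `λ`,
every discrete value `x ∈ {ω 1, …, ω K}` (positive, strictly increasing breakpoints)
and every continuous value `y ∈ [a, b]` are realized by some feasible point of the PLT
constraint system, on which the linearized expression equals `x^λ y` exactly. -/
theorem plt_power_product_feasible (K : ℕ) (hK : 2 ≤ K) (lam : ℝ) (ω : ℕ → ℝ)
    (hpos : ∀ i ∈ Finset.Icc 1 K, 0 < ω i)
    (hmono : ∀ i ∈ Finset.Icc 1 K, ∀ j ∈ Finset.Icc 1 K, i < j → ω i < ω j)
    (a b : ℝ) (hab : a ≤ b)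
    (yv xv : ℝ) (hyv1 : a ≤ yv) (hyv2 : yv ≤ b)
    (hxv : ∃ m ∈ Finset.Icc 1 K, xv = ω m) :
    ∃ (z : ℕ → ℕ → ℝ) (y : ℕ → ℝ),
      (∀ i ∈ Finset.Icc 1 K, ∀ j ∈ Finset.Icc 1 2, 0 ≤ z i j) ∧
      (∀ k ∈ Finset.Icc 1 (K - 1), y k = 0 ∨ y k = 1) ∧
      ((∑ k ∈ Finset.Icc 1 (K - 1), y k) = 1) ∧
      ((∑ i ∈ Finset.Icc 1 K, (z i 1 + z i 2)) = 1) ∧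
      (∀ j ∈ Finset.Icc 1 2, z 1 j ≤ y 1) ∧
      (∀ j ∈ Finset.Icc 1 2, z K j ≤ y (K - 1)) ∧
      (∀ l ∈ Finset.Icc 2 (K - 1), ∀ j ∈ Finset.Icc 1 2, z l j ≤ y (l - 1) + y l) ∧
      (yv = ∑ i ∈ Finset.Icc 1 K, (b * z i 2 + a * z i 1)) ∧
      (xv = ∑ i ∈ Finset.Icc 1 K, ω i * (z i 1 + z i 2)) ∧
      (∑ i ∈ Finset.Icc 1 K, ω i ^ lam * (b * z i 2 + a * z i 1)) = xv ^ lam * yv := by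
  obtain ⟨m, hm, hxm⟩ := hxv
  rw [Finset.mem_Icc] at hm
  set t2 : ℝ := if b = a then 0 else (yv - a) / (b - a) with ht2def
  set t1 : ℝ := 1 - t2 with ht1def
  have ht2nn : 0 ≤ t2 := by
    rw [ht2def]; split_ifs with h
    · norm_num
    · exact div_nonneg (by linarith) (sub_nonneg.mpr hab)
  have ht2le : t2 ≤ 1 := by
    rw [ht2def]; split_ifs with h
    · norm_num
    · have hba : 0 < b - a := by rcases lt_or_eq_of_le hab with h'|h'; linarith; exact absurd h'.symm h
      rw [div_le_one hba]; linarith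
  have ht1nn : 0 ≤ t1 := by rw [ht1def]; linarith
  have hts : t1 + t2 = 1 := by rw [ht1def]; ring
  have hyval : b * t2 + a * t1 = yv := by
    rw [ht1def, ht2def]; split_ifs with h
    · simp; linarith
    · have hba : b - a ≠ 0 := fun hc => h (by linarith)
      field_simp; ring
  set k0 : ℕ := min m (K - 1) with hk0def
  refine ⟨fun i j => if i = m then (if j = 1 then t1 else t2) else 0,
          fun k => if k = k0 then 1 else 0, ?_, ?_, ?_, ?_, ?_, ?_, ?_, ?_, ?_, ?_⟩
  · intro i _ j _
    dsimp only; split_ifs <;> first | exact ht1nn | exact ht2nn | norm_num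
  · intro k _; dsimp only; split_ifs <;> simp
  · have hk0mem : k0 ∈ Finset.Icc 1 (K - 1) := by
      rw [Finset.mem_Icc, hk0def]
      constructor
      · exact le_min hm.1 (by omega)
      · exact min_le_right _ _
    rw [Finset.sum_ite_eq' _ k0 (fun _ => (1:ℝ)), if_pos hk0mem]
  · rw [Finset.sum_eq_single_of_mem m (Finset.mem_Icc.mpr hm)]
    · simp [hts]
    · intro i _ hi; simp [hi]
  · intro j hj
    simp only
    split_ifs <;> first | linarith | omega
  · intro j hj
    simp only
    split_ifs <;> first | linarith | omega
  · intro l hl j hj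
    rw [Finset.mem_Icc] at hl
    simp only
    split_ifs <;> first | linarith | omega
  · rw [Finset.sum_eq_single_of_mem m (Finset.mem_Icc.mpr hm)]
    · simp [hyval.symm]
    · intro i _ hi; simp [hi]
  · rw [Finset.sum_eq_single_of_mem m (Finset.mem_Icc.mpr hm)]
    · simp [hts, hxm]
    · intro i _ hi; simp [hi]
  · rw [Finset.sum_eq_single_of_mem m (Finset.mem_Icc.mpr hm)]
    · simp only [if_pos rfl]
      norm_num
      rw [hxm, hyval]
    · intro i _ hi; simp [hi]
end
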